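/- arXiv:2310.20258 — 2 statements merged into one kernel-verified Lean document; each statement's English description precedes it below -/
import Mathlib

section
/- Let (Ω, μ) be a probability space, Z a metric space, Y a metric space, and f : Z → Y an L-Lipschitz function with Lipschitz constant L > 0. Let Z₁, Z₂ : Ω → Z be independent and identically distributed random variables, and define the real-valued random variables D_Z(ω) = dist(Z₁(ω), Z₂(ω)) and D_Y(ω) = dist(f(Z₁(ω)), f(Z₂(ω))). Assume D_Z and D_Y are square-integrable with positive variances Var(D_Z) > 0 and Var(D_Y) > 0. Then the Pearson correlation coefficient of D_Z and D_Y satisfies Corr(D_Z, D_Y) ≥ ((1/L)·(Var(D_Y) + (E[D_Y])²) − L·(E[D_Z])²) / √(Var(D_Z)·Var(D_Y)). -/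
open MeasureTheory ProbabilityTheory

/-!
Lipschitz continuity gives the pointwise bound `0 ≤ D_Y ≤ L · D_Z`. Multiplying it by `D_Y / L`
and taking expectations gives `E[D_Y²] / L ≤ E[D_Z D_Y]`; taking expectations directly and
multiplying by `E[D_Z] ≥ 0` gives `E[D_Z] E[D_Y] ≤ L · E[D_Z]²`. Subtracting yields the lower bound
on the covariance, and dividing by `√(Var D_Z · Var D_Y) ≥ 0` the one on the correlation.
-/

lemma one_div_mul_sq_le_mul_of_le_mul {a b L : ℝ} (hL : 0 < L) (hb : 0 ≤ b) (hba : b ≤ L * a) :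
    1 / L * b ^ 2 ≤ a * b := by
  rw [one_div_mul_eq_div, div_le_iff₀ hL]
  nlinarith

namespace MeasureTheory

variable {Ω : Type*} [MeasurableSpace Ω] {μ : Measure Ω} {X Y : Ω → ℝ} {L : ℝ}

lemma one_div_mul_integral_sq_le_integral_mul (hL : 0 < L) (hY : ∀ᵐ ω ∂μ, 0 ≤ Y ω)
    (hYX : ∀ᵐ ω ∂μ, Y ω ≤ L * X ω) (hY2 : Integrable (fun ω => Y ω ^ 2) μ)
    (hXY : Integrable (fun ω => X ω * Y ω) μ) :
    1 / L * ∫ ω, Y ω ^ 2 ∂μ ≤ ∫ ω, X ω * Y ω ∂μ := by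
  rw [← integral_const_mul]
  refine integral_mono_ae (hY2.const_mul _) hXY ?_
  filter_upwards [hY, hYX] with ω hYω hYXω
  exact one_div_mul_sq_le_mul_of_le_mul hL hYω hYXω

lemma integral_mul_integral_le_mul_integral_sq (hX : ∀ᵐ ω ∂μ, 0 ≤ X ω)
    (hYX : ∀ᵐ ω ∂μ, Y ω ≤ L * X ω) (hXi : Integrable X μ) (hYi : Integrable Y μ) :
    (∫ ω, X ω ∂μ) * ∫ ω, Y ω ∂μ ≤ L * (∫ ω, X ω ∂μ) ^ 2 := by
  have hmean : ∫ ω, Y ω ∂μ ≤ L * ∫ ω, X ω ∂μ := by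
    rw [← integral_const_mul]
    exact integral_mono_ae hYi (hXi.const_mul L) hYX
  calc (∫ ω, X ω ∂μ) * ∫ ω, Y ω ∂μ ≤ (∫ ω, X ω ∂μ) * (L * ∫ ω, X ω ∂μ) :=
        mul_le_mul_of_nonneg_left hmean (integral_nonneg_of_ae hX)
    _ = L * (∫ ω, X ω ∂μ) ^ 2 := by ring

lemma one_div_mul_integral_sq_sub_le_integral_mul_sub [IsFiniteMeasure μ] (hL : 0 < L)
    (hX : ∀ᵐ ω ∂μ, 0 ≤ X ω) (hY : ∀ᵐ ω ∂μ, 0 ≤ Y ω) (hYX : ∀ᵐ ω ∂μ, Y ω ≤ L * X ω)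
    (hX2 : MemLp X 2 μ) (hY2 : MemLp Y 2 μ) :
    1 / L * ∫ ω, Y ω ^ 2 ∂μ - L * (∫ ω, X ω ∂μ) ^ 2 ≤
      ∫ ω, X ω * Y ω ∂μ - (∫ ω, X ω ∂μ) * ∫ ω, Y ω ∂μ := by
  have hsecond := one_div_mul_integral_sq_le_integral_mul hL hY hYX hY2.integrable_sq
    (hX2.integrable_mul hY2)
  have hfirst := integral_mul_integral_le_mul_integral_sq hX hYX
    (hX2.integrable one_le_two) (hY2.integrable one_le_two)
  linarith

end MeasureTheory

theorem correlation_dist_ge_of_lipschitz_general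
    {Ω : Type*} [MeasurableSpace Ω] (μ : Measure Ω) [IsProbabilityMeasure μ]
    {Z Y : Type*} [MetricSpace Z] [MetricSpace Y]
    (f : Z → Y) (L : ℝ) (hL : 0 < L)
    (hf : ∀ z₁ z₂ : Z, dist (f z₁) (f z₂) ≤ L * dist z₁ z₂)
    (Z₁ Z₂ : Ω → Z)
    (DZ DY : Ω → ℝ)
    (hDZ : DZ = fun ω => dist (Z₁ ω) (Z₂ ω))
    (hDY : DY = fun ω => dist (f (Z₁ ω)) (f (Z₂ ω)))
    (hDZ2 : MemLp DZ 2 μ) (hDY2 : MemLp DY 2 μ) :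
    (∫ ω, DZ ω * DY ω ∂μ - (∫ ω, DZ ω ∂μ) * ∫ ω, DY ω ∂μ) /
        Real.sqrt ((∫ ω, DZ ω ^ 2 ∂μ - (∫ ω, DZ ω ∂μ) ^ 2) *
          (∫ ω, DY ω ^ 2 ∂μ - (∫ ω, DY ω ∂μ) ^ 2)) ≥
      ((1 / L) * ((∫ ω, DY ω ^ 2 ∂μ - (∫ ω, DY ω ∂μ) ^ 2) + (∫ ω, DY ω ∂μ) ^ 2) -
          L * (∫ ω, DZ ω ∂μ) ^ 2) /
        Real.sqrt ((∫ ω, DZ ω ^ 2 ∂μ - (∫ ω, DZ ω ∂μ) ^ 2) *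
          (∫ ω, DY ω ^ 2 ∂μ - (∫ ω, DY ω ∂μ) ^ 2)) := by
  subst hDZ hDY
  have hcov := one_div_mul_integral_sq_sub_le_integral_mul_sub hL
    (.of_forall fun _ => dist_nonneg) (.of_forall fun _ => dist_nonneg)
    (.of_forall fun ω => hf (Z₁ ω) (Z₂ ω)) hDZ2 hDY2
  refine div_le_div_of_nonneg_right ?_ (Real.sqrt_nonneg _)
  rwa [sub_add_cancel]

/-- Theorem 1 (CoBO): Let `Z₁, Z₂` be i.i.d. random variables valued in a metric space `Z`,
`f : Z → Y` an `L`-Lipschitz map into a metric space `Y` with `L > 0`, and set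
`D_Z(ω) = dist(Z₁ ω, Z₂ ω)`, `D_Y(ω) = dist(f (Z₁ ω), f (Z₂ ω))`. If `D_Z, D_Y` are
square-integrable with positive variances, then the Pearson correlation
`Corr(D_Z, D_Y) = (E[D_Z D_Y] − E[D_Z]E[D_Y]) / √(Var(D_Z)·Var(D_Y))` satisfies
`Corr(D_Z, D_Y) ≥ ((1/L)·(Var(D_Y) + (E[D_Y])²) − L·(E[D_Z])²) / √(Var(D_Z)·Var(D_Y))`,
where `Var(X) = E[X²] − (E[X])²`. -/
theorem correlation_dist_ge_of_lipschitz
    {Ω : Type*} [MeasurableSpace Ω] (μ : Measure Ω) [IsProbabilityMeasure μ]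
    {Z Y : Type*} [MetricSpace Z] [MetricSpace Y]
    [MeasurableSpace Z] [BorelSpace Z]
    (f : Z → Y) (L : ℝ) (hL : 0 < L)
    (hf : ∀ z₁ z₂ : Z, dist (f z₁) (f z₂) ≤ L * dist z₁ z₂)
    (Z₁ Z₂ : Ω → Z) (hZ₁ : Measurable Z₁) (hZ₂ : Measurable Z₂)
    (hindep : IndepFun Z₁ Z₂ μ)
    (hident : IdentDistrib Z₁ Z₂ μ μ)
    (DZ DY : Ω → ℝ)
    (hDZ : DZ = fun ω => dist (Z₁ ω) (Z₂ ω))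
    (hDY : DY = fun ω => dist (f (Z₁ ω)) (f (Z₂ ω)))
    (hDZ2 : MemLp DZ 2 μ) (hDY2 : MemLp DY 2 μ)
    (hVarZ : 0 < ∫ ω, DZ ω ^ 2 ∂μ - (∫ ω, DZ ω ∂μ) ^ 2)
    (hVarY : 0 < ∫ ω, DY ω ^ 2 ∂μ - (∫ ω, DY ω ∂μ) ^ 2) :
    (∫ ω, DZ ω * DY ω ∂μ - (∫ ω, DZ ω ∂μ) * ∫ ω, DY ω ∂μ) /
        Real.sqrt ((∫ ω, DZ ω ^ 2 ∂μ - (∫ ω, DZ ω ∂μ) ^ 2) *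
          (∫ ω, DY ω ^ 2 ∂μ - (∫ ω, DY ω ∂μ) ^ 2)) ≥
      ((1 / L) * ((∫ ω, DY ω ^ 2 ∂μ - (∫ ω, DY ω ∂μ) ^ 2) + (∫ ω, DY ω ∂μ) ^ 2) -
          L * (∫ ω, DZ ω ∂μ) ^ 2) /
        Real.sqrt ((∫ ω, DZ ω ^ 2 ∂μ - (∫ ω, DZ ω ∂μ) ^ 2) *
          (∫ ω, DY ω ^ 2 ∂μ - (∫ ω, DY ω ∂μ) ^ 2)) :=
  correlation_dist_ge_of_lipschitz_general μ f L hL hf Z₁ Z₂ DZ DY hDZ hDY hDZ2 hDY2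
end

section
/- Let X and Y be square-integrable real-valued random variables on a probability space with X ≥ 0 almost surely, Y ≥ 0 almost surely, and Y ≤ L·X almost surely for a constant L > 0. Assume Var(X) > 0 and Var(Y) > 0. Then the Pearson correlation coefficient satisfies Corr(X, Y) ≥ ((1/L)·(Var(Y) + (E[Y])²) − L·(E[X])²) / √(Var(X)·Var(Y)). -/
/-!
Pointwise, `0 ≤ Y ≤ L X` gives `Y² ≤ L X Y`, so `E[Y²] ≤ L E[XY]`; integrating `Y ≤ L X`
and multiplying by `E[X] ≥ 0` gives `E[X] E[Y] ≤ L E[X]²`. Subtracting, `E[Y²] / L - L E[X]²`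
is at most `Cov(X, Y)`, and dividing by the nonnegative `√(Var X · Var Y)` preserves this.
The numerator of the claim is `E[Y²] / L - L E[X]²`, as `Var Y + E[Y]² = E[Y²]`.
-/

open MeasureTheory

section LowerBound

variable {Ω : Type*} [MeasurableSpace Ω] {μ : Measure Ω} {X Y : Ω → ℝ} {L : ℝ}

lemma integral_sq_le_mul_integral_mul (hY0 : ∀ᵐ ω ∂μ, 0 ≤ Y ω)
    (hYX : ∀ᵐ ω ∂μ, Y ω ≤ L * X ω) (hY2 : Integrable (fun ω => Y ω ^ 2) μ)
    (hXY : Integrable (fun ω => X ω * Y ω) μ) :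
    ∫ ω, Y ω ^ 2 ∂μ ≤ L * ∫ ω, X ω * Y ω ∂μ := by
  rw [← integral_const_mul]
  refine integral_mono_ae hY2 (hXY.const_mul L) ?_
  filter_upwards [hY0, hYX] with ω hY hle
  calc Y ω ^ 2 = Y ω * Y ω := sq (Y ω)
    _ ≤ L * X ω * Y ω := mul_le_mul_of_nonneg_right hle hY
    _ = L * (X ω * Y ω) := mul_assoc _ _ _

lemma integral_mul_integral_le_mul_sq (hX0 : ∀ᵐ ω ∂μ, 0 ≤ X ω)
    (hYX : ∀ᵐ ω ∂μ, Y ω ≤ L * X ω) (hX : Integrable X μ) (hY : Integrable Y μ) :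
    (∫ ω, X ω ∂μ) * ∫ ω, Y ω ∂μ ≤ L * (∫ ω, X ω ∂μ) ^ 2 := by
  have hEY : ∫ ω, Y ω ∂μ ≤ L * ∫ ω, X ω ∂μ := by
    rw [← integral_const_mul]
    exact integral_mono_ae hY (hX.const_mul L) hYX
  calc (∫ ω, X ω ∂μ) * ∫ ω, Y ω ∂μ
      ≤ (∫ ω, X ω ∂μ) * (L * ∫ ω, X ω ∂μ) :=
        mul_le_mul_of_nonneg_left hEY (integral_nonneg_of_ae hX0)
    _ = L * (∫ ω, X ω ∂μ) ^ 2 := by ring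

lemma one_div_mul_integral_sq_sub_le_covariance [IsFiniteMeasure μ] (hL : 0 < L)
    (hX0 : ∀ᵐ ω ∂μ, 0 ≤ X ω) (hY0 : ∀ᵐ ω ∂μ, 0 ≤ Y ω) (hYX : ∀ᵐ ω ∂μ, Y ω ≤ L * X ω)
    (hX2 : MemLp X 2 μ) (hY2 : MemLp Y 2 μ) :
    (1 / L) * ∫ ω, Y ω ^ 2 ∂μ - L * (∫ ω, X ω ∂μ) ^ 2 ≤
      ∫ ω, X ω * Y ω ∂μ - (∫ ω, X ω ∂μ) * ∫ ω, Y ω ∂μ := by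
  have hsq : (1 / L) * ∫ ω, Y ω ^ 2 ∂μ ≤ ∫ ω, X ω * Y ω ∂μ := by
    rw [one_div_mul_eq_div, div_le_iff₀' hL]
    exact integral_sq_le_mul_integral_mul hY0 hYX hY2.integrable_sq (hX2.integrable_mul hY2)
  have hmean := integral_mul_integral_le_mul_sq hX0 hYX
    (hX2.integrable one_le_two) (hY2.integrable one_le_two)
  linarith

end LowerBound

theorem correlation_ge_of_le_smul_general
    {Ω : Type*} [MeasurableSpace Ω] (μ : Measure Ω) [IsProbabilityMeasure μ]
    (X Y : Ω → ℝ) (L : ℝ) (hL : 0 < L)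
    (hX0 : ∀ᵐ ω ∂μ, 0 ≤ X ω)
    (hY0 : ∀ᵐ ω ∂μ, 0 ≤ Y ω)
    (hYX : ∀ᵐ ω ∂μ, Y ω ≤ L * X ω)
    (hX2 : MemLp X 2 μ) (hY2 : MemLp Y 2 μ) :
    (∫ ω, X ω * Y ω ∂μ - (∫ ω, X ω ∂μ) * ∫ ω, Y ω ∂μ) /
        Real.sqrt ((∫ ω, X ω ^ 2 ∂μ - (∫ ω, X ω ∂μ) ^ 2) *
          (∫ ω, Y ω ^ 2 ∂μ - (∫ ω, Y ω ∂μ) ^ 2)) ≥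
      ((1 / L) * ((∫ ω, Y ω ^ 2 ∂μ - (∫ ω, Y ω ∂μ) ^ 2) + (∫ ω, Y ω ∂μ) ^ 2) -
          L * (∫ ω, X ω ∂μ) ^ 2) /
        Real.sqrt ((∫ ω, X ω ^ 2 ∂μ - (∫ ω, X ω ∂μ) ^ 2) *
          (∫ ω, Y ω ^ 2 ∂μ - (∫ ω, Y ω ∂μ) ^ 2)) := by
  rw [sub_add_cancel]
  exact div_le_div_of_nonneg_right
    (one_div_mul_integral_sq_sub_le_covariance hL hX0 hY0 hYX hX2 hY2) (Real.sqrt_nonneg _)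

/-- Abstract form of Theorem 1 (CoBO): for square-integrable `X, Y ≥ 0` a.s. with
`Y ≤ L·X` a.s., `L > 0`, and positive variances, the Pearson correlation
`Corr(X,Y) = (E[XY] − E[X]E[Y]) / √(Var(X)·Var(Y))` is bounded below by
`((1/L)·(Var(Y) + (E[Y])²) − L·(E[X])²) / √(Var(X)·Var(Y))`,
where `Var(X) = E[X²] − (E[X])²`. -/
theorem correlation_ge_of_le_smul
    {Ω : Type*} [MeasurableSpace Ω] (μ : Measure Ω) [IsProbabilityMeasure μ]
    (X Y : Ω → ℝ) (L : ℝ) (hL : 0 < L)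
    (hX0 : ∀ᵐ ω ∂μ, 0 ≤ X ω)
    (hY0 : ∀ᵐ ω ∂μ, 0 ≤ Y ω)
    (hYX : ∀ᵐ ω ∂μ, Y ω ≤ L * X ω)
    (hX2 : MemLp X 2 μ) (hY2 : MemLp Y 2 μ)
    (hVarX : 0 < ∫ ω, X ω ^ 2 ∂μ - (∫ ω, X ω ∂μ) ^ 2)
    (hVarY : 0 < ∫ ω, Y ω ^ 2 ∂μ - (∫ ω, Y ω ∂μ) ^ 2) :
    (∫ ω, X ω * Y ω ∂μ - (∫ ω, X ω ∂μ) * ∫ ω, Y ω ∂μ) /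
        Real.sqrt ((∫ ω, X ω ^ 2 ∂μ - (∫ ω, X ω ∂μ) ^ 2) *
          (∫ ω, Y ω ^ 2 ∂μ - (∫ ω, Y ω ∂μ) ^ 2)) ≥
      ((1 / L) * ((∫ ω, Y ω ^ 2 ∂μ - (∫ ω, Y ω ∂μ) ^ 2) + (∫ ω, Y ω ∂μ) ^ 2) -
          L * (∫ ω, X ω ∂μ) ^ 2) /
        Real.sqrt ((∫ ω, X ω ^ 2 ∂μ - (∫ ω, X ω ∂μ) ^ 2) *
          (∫ ω, Y ω ^ 2 ∂μ - (∫ ω, Y ω ∂μ) ^ 2)) :=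
  correlation_ge_of_le_smul_general μ X Y L hL hX0 hY0 hYX hX2 hY2
end
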